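/- arXiv:2507.16776 — 3 statements merged into one kernel-verified Lean document; each statement's English description precedes it below -/
import Mathlib

section
/- Let α ∈ (0,1) and suppose the data are n i.i.d. observations from a Bernoulli distribution with unknown parameter p ∈ (0,1). There exists no method of constructing confidence sets CS(1-α, n) for p that is simultaneously non-asymptotically valid (for all n and all p ∈ (0,1), the probability that CS contains p is at least 1-α) and asymptotically exact uniformly over p ∈ (0,1) (the supremum over p of |P_p(CS ∋ p) - (1-α)| tends to 0 as n → ∞). -/
/-!
For `p` close to `0` the all-`false` sample has probability `(1 - p) ^ n > α`, so a set valid at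
level `1 - α` must contain `p` at that sample; its coverage is then at least `(1 - p) ^ n`, which is
close to `1`. Hence for every `n` the worst-case coverage error is at least `α`.
-/

open MeasureTheory

noncomputable def bern (p : ℝ) : Measure Bool :=
  ENNReal.ofReal p • Measure.dirac true + ENNReal.ofReal (1 - p) • Measure.dirac false

noncomputable def bernCoverage (n : ℕ) (p : ℝ) (C : (Fin n → Bool) → Set ℝ) : ℝ :=
  ((Measure.pi fun _ : Fin n => bern p) {ω | p ∈ C ω}).toReal

open Set Filter Topology

lemma isProbabilityMeasure_bern {p : ℝ} (h0 : 0 ≤ p) (h1 : p ≤ 1) :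
    IsProbabilityMeasure (bern p) := by
  constructor
  simp [bern, ← ENNReal.ofReal_add h0 (sub_nonneg.2 h1)]

lemma measureReal_pi_bern_const_false (n : ℕ) {p : ℝ} (h0 : 0 ≤ p) (h1 : p ≤ 1) :
    (Measure.pi fun _ : Fin n => bern p).real {fun _ => false} = (1 - p) ^ n := by
  have := isProbabilityMeasure_bern h0 h1
  have hpi : ({fun _ => false} : Set (Fin n → Bool)) = univ.pi fun _ => {false} := by
    ext ω; simp [funext_iff]
  rw [measureReal_def, hpi, Measure.pi_pi]
  simp [bern, ENNReal.toReal_ofReal (sub_nonneg.2 h1)]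

lemma pow_one_sub_le_bernCoverage {n : ℕ} {p : ℝ} (h0 : 0 ≤ p) (h1 : p ≤ 1)
    {C : (Fin n → Bool) → Set ℝ} (h : p ∈ C fun _ => false) :
    (1 - p) ^ n ≤ bernCoverage n p C := by
  have := isProbabilityMeasure_bern h0 h1
  rw [← measureReal_pi_bern_const_false n h0 h1]
  exact measureReal_mono (singleton_subset_iff.2 h)

lemma bernCoverage_le_one_sub_pow {n : ℕ} {p : ℝ} (h0 : 0 ≤ p) (h1 : p ≤ 1)
    {C : (Fin n → Bool) → Set ℝ} (h : p ∉ C fun _ => false) :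
    bernCoverage n p C ≤ 1 - (1 - p) ^ n := by
  have := isProbabilityMeasure_bern h0 h1
  rw [← measureReal_pi_bern_const_false n h0 h1,
    ← probReal_compl_eq_one_sub (measurableSet_singleton _)]
  exact measureReal_mono fun ω hω hfalse => h (hfalse ▸ hω)

lemma bernCoverage_mem_Icc (n : ℕ) {p : ℝ} (h0 : 0 ≤ p) (h1 : p ≤ 1)
    (C : (Fin n → Bool) → Set ℝ) : bernCoverage n p C ∈ Icc 0 1 := by
  have := isProbabilityMeasure_bern h0 h1
  exact ⟨measureReal_nonneg, measureReal_le_one⟩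

lemma exists_mem_Ioo_lt_pow_one_sub (n : ℕ) {c : ℝ} (hc : c < 1) :
    ∃ p ∈ Ioo (0 : ℝ) 1, c < (1 - p) ^ n := by
  have hlim : Tendsto (fun p : ℝ => (1 - p) ^ n) (𝓝[>] 0) (𝓝 1) := by
    refine ((continuous_const.sub continuous_id).pow n).tendsto' 0 1 ?_ |>.mono_left
      nhdsWithin_le_nhds
    simp
  obtain ⟨p, hpow, hp⟩ := ((hlim.eventually_const_lt hc).and (Ioo_mem_nhdsGT one_pos)).exists
  exact ⟨p, hp, hpow⟩

lemma le_iSup_abs_bernCoverage_sub {α : ℝ} (hα : α < 1) (n : ℕ) (C : (Fin n → Bool) → Set ℝ)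
    (hvalid : ∀ p ∈ Ioo (0 : ℝ) 1, 1 - α ≤ bernCoverage n p C) :
    α ≤ ⨆ p : Ioo (0 : ℝ) 1, |bernCoverage n p C - (1 - α)| := by
  have hbdd : BddAbove (range fun p : Ioo (0 : ℝ) 1 => |bernCoverage n p C - (1 - α)|) := by
    refine ⟨1 + |1 - α|, forall_mem_range.2 fun p => (abs_sub _ _).trans ?_⟩
    obtain ⟨hcov0, hcov1⟩ := bernCoverage_mem_Icc n p.2.1.le p.2.2.le C
    gcongr
    rwa [abs_of_nonneg hcov0]
  refine le_of_forall_sub_le fun ε hε => ?_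
  obtain ⟨p, hp, hpow⟩ := exists_mem_Ioo_lt_pow_one_sub n (max_lt hα (sub_lt_self 1 hε))
  rw [max_lt_iff] at hpow
  have hmem : p ∈ C fun _ => false := by
    by_contra h
    linarith [hvalid p hp, bernCoverage_le_one_sub_pow hp.1.le hp.2.le h]
  calc α - ε ≤ bernCoverage n p C - (1 - α) := by
        linarith [pow_one_sub_le_bernCoverage hp.1.le hp.2.le hmem]
    _ ≤ |bernCoverage n p C - (1 - α)| := le_abs_self _
    _ ≤ ⨆ p : Ioo (0 : ℝ) 1, |bernCoverage n p C - (1 - α)| := le_ciSup hbdd ⟨p, hp⟩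

/-- There is no confidence-set method for the Bernoulli parameter that is both
non-asymptotically valid and asymptotically exact uniformly over `p ∈ (0,1)`. -/
theorem stmt_0 (α : ℝ) (hα : α ∈ Set.Ioo (0 : ℝ) 1) :
    ¬ ∃ CS : (n : ℕ) → (Fin n → Bool) → Set ℝ,
      (∀ n : ℕ, 1 ≤ n → ∀ p ∈ Set.Ioo (0 : ℝ) 1, 1 - α ≤ bernCoverage n p (CS n)) ∧
      Filter.Tendsto
        (fun n : ℕ => ⨆ p : Set.Ioo (0 : ℝ) 1, |bernCoverage n p (CS n) - (1 - α)|)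
        Filter.atTop (nhds 0) := by
  rintro ⟨CS, hvalid, htend⟩
  obtain ⟨n, hsup, hn⟩ :=
    ((htend.eventually_lt_const hα.1).and (eventually_ge_atTop 1)).exists
  exact (le_iSup_abs_bernCoverage_sub hα.2 n (CS n) (hvalid n hn)).not_gt hsup
end

section
/- Suppose that for every α ∈ (0,1) there exists a sequence of confidence sets CS(1-α,n) that is asymptotically exact uniformly over Θ, i.e. f(α,n) := sup_{θ∈Θ} |P_θ(CS(1-α,n) ∋ T(θ)) - (1-α)| → 0 as n → ∞. Then for every α ∈ (0,1) there exists a sequence of confidence sets C̃S(1-α,n) that is simultaneously non-asymptotically valid over Θ at level 1-α (P_θ(C̃S ∋ T(θ)) ≥ 1-α for all n ≥ 1 and θ ∈ Θ) and asymptotically exact uniformly over Θ at level 1-α. -/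
/-!
Approximate the level `1 - α` from above by levels `1 - β k` with `β k ↑ α`. Since the method
at level `1 - β k` is uniformly exact, from some sample size on its coverage is within `α - β k`
of `1 - β k`, hence at least `1 - α`. A diagonal choice of `k = κ n → ∞` then gives coverage at
least `1 - α` and within `2 (α - β (κ n)) → 0` of `1 - α`; at the sample sizes where the chosen
method is not yet that accurate, the trivial confidence set `ℝ` is used.
-/

open MeasureTheory Filter Set Topology

theorem tendsto_iSup_abs_sub_nhds_zero_iff {ι Θ : Type*} {l : Filter ι} {f : ι → Θ → ℝ} {c : ℝ}
    (hf : ∀ i, BddAbove (range fun θ => |f i θ - c|)) :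
    Tendsto (fun i => ⨆ θ, |f i θ - c|) l (𝓝 0) ↔ TendstoUniformly f (fun _ => c) l := by
  have hsup_nonneg : ∀ i, 0 ≤ ⨆ θ, |f i θ - c| := fun i => Real.iSup_nonneg fun _ => abs_nonneg _
  simp only [Metric.tendsto_nhds, Metric.tendstoUniformly_iff, Real.dist_eq, sub_zero,
    abs_of_nonneg (hsup_nonneg _), abs_sub_comm c]
  refine ⟨fun h ε hε => (h ε hε).mono fun i hi θ => (le_ciSup (hf i) θ).trans_lt hi,
    fun h ε hε => (h (ε / 2) (half_pos hε)).mono fun i hi => ?_⟩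
  exact (Real.iSup_le (fun θ => (hi θ).le) (half_pos hε).le).trans_lt (half_lt_self hε)

theorem exists_tendsto_atTop_eventually_diagonal {p : ℕ → ℕ → Prop}
    (h : ∀ k, ∀ᶠ n in atTop, p k n) :
    ∃ κ : ℕ → ℕ, Tendsto κ atTop atTop ∧ ∀ᶠ n in atTop, p (κ n) n := by
  obtain ⟨φ, hφ, hφp⟩ := extraction_forall_of_eventually fun k =>
    eventually_forall_ge_atTop.2 (h k)
  -- `κ n` is the last `k` whose threshold `φ k` has been passed.
  let κ n := Nat.findGreatest (fun k => φ k ≤ n) n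
  have hφκ : ∀ n, φ 0 ≤ n → φ (κ n) ≤ n := fun n hn =>
    Nat.findGreatest_spec (P := fun k => φ k ≤ n) (Nat.zero_le n) hn
  refine ⟨κ, tendsto_atTop_atTop.2 fun K => ⟨φ K, fun n hn => ?_⟩, ?_⟩
  · exact Nat.le_findGreatest ((hφ.id_le K).trans hn) hn
  · filter_upwards [eventually_ge_atTop (φ 0)] with n hn
    exact hφp (κ n) n (hφκ n hn)

section Coverage

variable {Θ : Type*} {Ω : ℕ → Type*} [∀ n, MeasurableSpace (Ω n)]

noncomputable def coverage (P : Θ → (n : ℕ) → Measure (Ω n)) (T : Θ → ℝ)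
    (C : (n : ℕ) → Ω n → Set ℝ) (n : ℕ) (θ : Θ) : ℝ :=
  (P θ n {ω | T θ ∈ C n ω}).toReal

variable (P : Θ → (n : ℕ) → Measure (Ω n)) [∀ θ n, IsProbabilityMeasure (P θ n)] (T : Θ → ℝ)

theorem coverage_mem_Icc (C : (n : ℕ) → Ω n → Set ℝ) (n : ℕ) (θ : Θ) :
    coverage P T C n θ ∈ Icc 0 1 :=
  ⟨ENNReal.toReal_nonneg, ENNReal.toReal_le_of_le_ofReal zero_le_one (by simp [prob_le_one])⟩

theorem coverage_univ (n : ℕ) (θ : Θ) : coverage P T (fun _ _ => univ) n θ = 1 := by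
  simp [coverage]

theorem bddAbove_range_abs_coverage_sub (C : (n : ℕ) → Ω n → Set ℝ) (n : ℕ) (c : ℝ) :
    BddAbove (range fun θ => |coverage P T C n θ - c|) := by
  refine ⟨1 + |c|, forall_mem_range.2 fun θ => ?_⟩
  have := coverage_mem_Icc P T C n θ
  calc |coverage P T C n θ - c| ≤ |coverage P T C n θ| + |c| := abs_sub _ _
    _ ≤ 1 + |c| := by rw [abs_of_nonneg this.1]; linarith [this.2]

theorem exists_coverage_ge_and_tendstoUniformly (CS : ℝ → (n : ℕ) → Ω n → Set ℝ)
    (hexact : ∀ α ∈ Ioo (0 : ℝ) 1,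
      TendstoUniformly (coverage P T (CS α)) (fun _ => 1 - α) atTop)
    {α : ℝ} (hα : α ∈ Ioo (0 : ℝ) 1) :
    ∃ CS' : (n : ℕ) → Ω n → Set ℝ, (∀ n θ, 1 - α ≤ coverage P T CS' n θ) ∧
      TendstoUniformly (coverage P T CS') (fun _ => 1 - α) atTop := by
  classical
  obtain ⟨β, -, hβ, hβα⟩ := exists_seq_strictMono_tendsto' hα.1
  let accurate k n := ∀ θ, |coverage P T (CS (β k)) n θ - (1 - β k)| ≤ α - β k
  have h_accurate : ∀ k, ∀ᶠ n in atTop, accurate k n := fun k =>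
    (Metric.tendstoUniformly_iff.1 (hexact (β k) ⟨(hβ k).1, (hβ k).2.trans hα.2⟩) _
      (sub_pos.2 (hβ k).2)).mono fun n hn θ => by
        rw [abs_sub_comm]; exact (hn θ).le
  obtain ⟨κ, hκ, hκ_accurate⟩ := exists_tendsto_atTop_eventually_diagonal h_accurate
  let CS' n := if accurate (κ n) n then CS (β (κ n)) n else fun _ => univ
  have hcov : ∀ n θ, coverage P T CS' n θ =
      if accurate (κ n) n then coverage P T (CS (β (κ n))) n θ else 1 := by
    intro n θ
    by_cases h : accurate (κ n) n
    · simp only [CS', coverage, h, if_true]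
    · simp only [CS', coverage, h, if_false]; exact coverage_univ P T n θ
  refine ⟨CS', fun n θ => ?_, Metric.tendstoUniformly_iff.2 fun ε hε => ?_⟩
  · rw [hcov]
    split_ifs with h
    · linarith [abs_le.1 (h θ)]
    · linarith [hα.1]
  · have hβκ : ∀ᶠ n in atTop, 2 * (α - β (κ n)) < ε := by
      have : Tendsto (fun n => 2 * (α - β (κ n))) atTop (𝓝 (2 * (α - α))) :=
        (tendsto_const_nhds.sub (hβα.comp hκ)).const_mul 2
      exact this.eventually_lt_const (by simpa using hε)
    filter_upwards [hβκ, hκ_accurate] with n hn h θ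
    rw [hcov, if_pos h, Real.dist_eq]
    calc |1 - α - coverage P T (CS (β (κ n))) n θ|
        ≤ |coverage P T (CS (β (κ n))) n θ - (1 - β (κ n))| + (α - β (κ n)) := by
          rw [abs_sub_comm]
          refine (abs_sub_le _ (1 - β (κ n)) _).trans ?_
          gcongr
          rw [abs_of_nonneg] <;> linarith [(hβ (κ n)).2]
      _ ≤ 2 * (α - β (κ n)) := by linarith [h θ]
      _ < ε := hn

end Coverage

/-- If for every level `1 - α` there is a confidence-set method that is asymptotically
exact uniformly over `Θ`, then for every level `1 - α` there is a confidence-set method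
that is both non-asymptotically valid and asymptotically exact uniformly over `Θ`. -/
theorem stmt_2 {Θ : Type*} {Ω : ℕ → Type*} [∀ n, MeasurableSpace (Ω n)]
    (P : Θ → (n : ℕ) → Measure (Ω n)) (hP : ∀ θ n, IsProbabilityMeasure (P θ n))
    (T : Θ → ℝ)
    (CS : ℝ → (n : ℕ) → Ω n → Set ℝ)
    (hexact : ∀ α ∈ Set.Ioo (0 : ℝ) 1,
      Filter.Tendsto
        (fun n => ⨆ θ : Θ, |((P θ n) {ω | T θ ∈ CS α n ω}).toReal - (1 - α)|)
        Filter.atTop (nhds 0)) :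
    ∀ α ∈ Set.Ioo (0 : ℝ) 1,
      ∃ CS' : (n : ℕ) → Ω n → Set ℝ,
        (∀ n : ℕ, 1 ≤ n → ∀ θ : Θ,
          (1 - α : ℝ) ≤ ((P θ n) {ω | T θ ∈ CS' n ω}).toReal) ∧
        Filter.Tendsto
          (fun n => ⨆ θ : Θ, |((P θ n) {ω | T θ ∈ CS' n ω}).toReal - (1 - α)|)
          Filter.atTop (nhds 0) := by
  intro α hα
  have := hP
  obtain ⟨CS', h_valid, h_exact⟩ := exists_coverage_ge_and_tendstoUniformly P T CS
    (fun β hβ => (tendsto_iSup_abs_sub_nhds_zero_iff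
      (bddAbove_range_abs_coverage_sub P T (CS β) · _)).1 (hexact β hβ)) hα
  exact ⟨CS', fun n _ θ => h_valid n θ,
    (tendsto_iSup_abs_sub_nhds_zero_iff (bddAbove_range_abs_coverage_sub P T CS' · _)).2 h_exact⟩
end

section
/- Let n ≥ 1, a > 1, and ξ_1, ..., ξ_n be i.i.d. real random variables with E[ξ] = 0, variance σ² > 0, and E[ξ⁴]/σ⁴ ≤ K. Let ξ̄_n be the sample mean and σ̂₀² := n^{-1}∑ξ_i². With Δ_B, Δ_E the Berry–Esseen and Edgeworth distances of √n ξ̄_n/σ to the standard normal (as usual), for every x > 0: P(√n |ξ̄_n| > σ̂₀ x) ≤ 2(Φ(-x/√a) + min(Δ_E, Δ_B)) + exp(-n(1-1/a)²/(2K)). -/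
/-!
On the event `σ̂₀² > σ²/a` we have `σ̂₀ x ≥ σ x/√a`, so the event `√n |ξ̄_n| > σ̂₀ x` is contained
in `{|S| > x/√a} ∪ {σ̂₀² ≤ σ²/a}` with `S = √n ξ̄_n/σ`. The first event has probability at most
`2(Φ(-x/√a) + Δ)` whenever the c.d.f. of `S` is within `Δ` of `Φ` plus a correction even in `x`,
which covers both `Δ_B` and `Δ_E`. The second is a lower tail of the sum of the nonnegative
variables `ξᵢ²`, bounded by Chernoff's method: for `u ≥ 0`, `e^{-u} ≤ 1 - u + u²/2`, so
`E e^{-tξ²} ≤ exp(-tσ² + t²Kσ⁴/2)`, and the optimal `t` gives `exp(-n(1-1/a)²/(2K))`.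
-/

open MeasureTheory ProbabilityTheory

/-- The standard normal density. -/
noncomputable def gpdf (t : ℝ) : ℝ := (Real.sqrt (2 * Real.pi))⁻¹ * Real.exp (-(t ^ 2) / 2)

/-- The standard normal c.d.f. `Φ`. -/
noncomputable def Phi (x : ℝ) : ℝ := ∫ t in Set.Iic x, gpdf t

lemma gpdf_eq_gaussianPDFReal : gpdf = gaussianPDFReal 0 1 := by
  ext t
  simp [gpdf, gaussianPDFReal]

lemma gpdf_nonneg (t : ℝ) : 0 ≤ gpdf t := by
  rw [gpdf_eq_gaussianPDFReal]
  exact gaussianPDFReal_nonneg _ _ _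

lemma gpdf_neg (t : ℝ) : gpdf (-t) = gpdf t := by simp [gpdf]

lemma integrable_gpdf : Integrable gpdf := by
  rw [gpdf_eq_gaussianPDFReal]
  exact integrable_gaussianPDFReal _ _

lemma integral_gpdf : ∫ t, gpdf t = 1 := by
  rw [gpdf_eq_gaussianPDFReal]
  exact integral_gaussianPDFReal_eq_one _ one_ne_zero

lemma Phi_nonneg (x : ℝ) : 0 ≤ Phi x :=
  setIntegral_nonneg measurableSet_Iic fun t _ => gpdf_nonneg t

lemma Phi_le_one (x : ℝ) : Phi x ≤ 1 :=
  integral_gpdf ▸ setIntegral_le_integral integrable_gpdf (.of_forall gpdf_nonneg)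

lemma Phi_neg (x : ℝ) : Phi (-x) = 1 - Phi x := by
  have hIoi : Phi (-x) = ∫ t in Set.Ioi x, gpdf t := by
    simpa only [Phi, gpdf_neg, neg_neg] using integral_comp_neg_Iic (-x) gpdf
  have hsplit : Phi x + ∫ t in Set.Ioi x, gpdf t = 1 := by
    rw [Phi, intervalIntegral.integral_Iic_add_Ioi integrable_gpdf.integrableOn
      integrable_gpdf.integrableOn, integral_gpdf]
  linarith

lemma abs_one_sub_sq_mul_gpdf_le (t : ℝ) : |(1 - t ^ 2) * gpdf t| ≤ 2 := by
  have hc : (Real.sqrt (2 * Real.pi))⁻¹ ≤ 1 :=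
    inv_le_one_of_one_le₀ (Real.one_le_sqrt.2 (by nlinarith [Real.pi_gt_three]))
  -- `1 + t²/2 ≤ exp (t²/2)` gives `(1 + t²) exp (-t²/2) ≤ 2`
  have hexp : (1 + t ^ 2) * Real.exp (-(t ^ 2) / 2) ≤ 2 := by
    have h := Real.add_one_le_exp (t ^ 2 / 2)
    rw [neg_div, Real.exp_neg, ← div_eq_mul_inv, div_le_iff₀ (Real.exp_pos _)]
    linarith
  rw [abs_mul, abs_of_nonneg (gpdf_nonneg t), gpdf]
  calc |1 - t ^ 2| * ((Real.sqrt (2 * Real.pi))⁻¹ * Real.exp (-(t ^ 2) / 2))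
      ≤ (1 + t ^ 2) * (1 * Real.exp (-(t ^ 2) / 2)) := by
        gcongr
        exact abs_sub_le_of_nonneg_of_le zero_le_one (by nlinarith) (sq_nonneg t) (by nlinarith)
    _ ≤ 2 := by rw [one_mul]; exact hexp

lemma Real.exp_neg_le_one_sub_add_sq_div_two {u : ℝ} (hu : 0 ≤ u) :
    Real.exp (-u) ≤ 1 - u + u ^ 2 / 2 := by
  rw [Real.exp_neg, inv_le_iff_one_le_mul₀ (Real.exp_pos u)]
  -- `(1 - u + u²/2)(1 + u + u²/2) = 1 + u⁴/4`
  calc (1 : ℝ) ≤ (1 - u + u ^ 2 / 2) * (1 + u + u ^ 2 / 2) := by nlinarith [pow_nonneg hu 4]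
    _ ≤ (1 - u + u ^ 2 / 2) * Real.exp u := by
        gcongr
        · nlinarith [sq_nonneg (u - 1)]
        · exact Real.quadratic_le_exp_of_nonneg hu

section Moments

variable {Ω : Type*} [MeasurableSpace Ω] {μ : Measure Ω}

lemma integrable_exp_neg_mul_of_nonneg [IsFiniteMeasure μ] {X : Ω → ℝ} (hX : Measurable X)
    (hnonneg : ∀ ω, 0 ≤ X ω) {t : ℝ} (ht : 0 ≤ t) :
    Integrable (fun ω => Real.exp (-t * X ω)) μ := by
  refine Integrable.of_bound (by fun_prop) 1 (.of_forall fun ω => ?_)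
  rw [Real.norm_eq_abs, abs_of_pos (Real.exp_pos _), Real.exp_le_one_iff]
  nlinarith [hnonneg ω]

variable [IsProbabilityMeasure μ]

lemma mgf_neg_le_exp_of_nonneg {X : Ω → ℝ} (hX : Measurable X) (hnonneg : ∀ ω, 0 ≤ X ω)
    (hint : Integrable (fun ω => X ω ^ 2) μ) {t : ℝ} (ht : 0 ≤ t) :
    mgf X μ (-t) ≤ Real.exp (-t * μ[X] + t ^ 2 * μ[fun ω => X ω ^ 2] / 2) := by
  have hint₁ : Integrable X μ :=
    ((memLp_two_iff_integrable_sq hX.aestronglyMeasurable).2 hint).integrable one_le_two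
  have hlin : Integrable (fun ω => 1 - t * X ω) μ := (integrable_const 1).sub (hint₁.const_mul t)
  have hsq : Integrable (fun ω => t ^ 2 * X ω ^ 2 / 2) μ := (hint.const_mul (t ^ 2)).div_const 2
  calc mgf X μ (-t) ≤ ∫ ω, (1 - t * X ω + t ^ 2 * X ω ^ 2 / 2) ∂μ := by
        refine integral_mono (integrable_exp_neg_mul_of_nonneg hX hnonneg ht) (hlin.add hsq)
          fun ω => ?_
        have h := Real.exp_neg_le_one_sub_add_sq_div_two (mul_nonneg ht (hnonneg ω))
        rw [← neg_mul] at h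
        linarith [mul_pow t (X ω) 2]
    _ = -t * μ[X] + t ^ 2 * μ[fun ω => X ω ^ 2] / 2 + 1 := by
        rw [integral_add hlin hsq, integral_sub (integrable_const 1) (hint₁.const_mul t),
          integral_const, integral_const_mul, integral_div, integral_const_mul]
        simp only [probReal_univ, one_smul]
        ring
    _ ≤ _ := Real.add_one_le_exp _

theorem measureReal_sum_le_sub_le_exp {ι : Type*} [Fintype ι] {Y : ι → Ω → ℝ}
    (hmeas : ∀ i, Measurable (Y i)) (hindep : iIndepFun Y μ) (hnonneg : ∀ i ω, 0 ≤ Y i ω)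
    (hint : ∀ i, Integrable (fun ω => Y i ω ^ 2) μ) {m v s : ℝ} (hm : ∀ i, μ[Y i] = m)
    (hv : ∀ i, μ[fun ω => Y i ω ^ 2] ≤ v) (hs : 0 ≤ s) :
    μ.real {ω | ∑ i, Y i ω ≤ Fintype.card ι * m - s}
      ≤ Real.exp (-s ^ 2 / (2 * (Fintype.card ι * v))) := by
  set n : ℝ := (Fintype.card ι : ℝ)
  rcases le_or_gt (n * v) 0 with hnv | hnv
  · refine measureReal_le_one.trans (Real.one_le_exp (div_nonneg_of_nonpos ?_ (by linarith)))
    exact neg_nonpos.2 (sq_nonneg s)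
  set t := s / (n * v)
  have ht : 0 ≤ t := div_nonneg hs hnv.le
  have hsum_nonneg : ∀ ω, 0 ≤ (∑ i, Y i) ω := fun ω => by
    simpa only [Finset.sum_apply] using Finset.sum_nonneg fun i _ => hnonneg i ω
  have hmgf : mgf (∑ i, Y i) μ (-t) ≤ Real.exp (n * (-t * m + t ^ 2 * v / 2)) := by
    rw [hindep.mgf_sum hmeas]
    calc ∏ i, mgf (Y i) μ (-t) ≤ ∏ _i : ι, Real.exp (-t * m + t ^ 2 * v / 2) := by
          refine Finset.prod_le_prod (fun i _ => mgf_nonneg) fun i _ => ?_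
          refine (mgf_neg_le_exp_of_nonneg (hmeas i) (hnonneg i) (hint i) ht).trans ?_
          rw [hm i]
          gcongr
          exact hv i
      _ = _ := by rw [Finset.prod_const, Finset.card_univ, ← Real.exp_nat_mul]
  calc μ.real {ω | ∑ i, Y i ω ≤ n * m - s}
      = μ.real {ω | (∑ i, Y i) ω ≤ n * m - s} := by simp only [Finset.sum_apply]
    _ ≤ Real.exp (- -t * (n * m - s)) * mgf (∑ i, Y i) μ (-t) :=
        measure_le_le_exp_mul_mgf _ (neg_nonpos.2 ht)
          (integrable_exp_neg_mul_of_nonneg (by fun_prop) hsum_nonneg ht)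
    _ ≤ Real.exp (- -t * (n * m - s)) * Real.exp (n * (-t * m + t ^ 2 * v / 2)) := by gcongr
    _ = Real.exp (-s ^ 2 / (2 * (n * v))) := by
        rw [← Real.exp_add]
        congr 1
        simp only [t]
        field_simp
        ring

end Moments

section SelfNormalized

variable {Ω : Type*} [MeasurableSpace Ω] {μ : Measure Ω} [IsProbabilityMeasure μ]

theorem measureReal_mean_sq_le_le_exp {ι : Type*} [Fintype ι] [Nonempty ι]
    {ξ : ι → Ω → ℝ} {ξ₀ : Ω → ℝ} (hmeas : ∀ i, Measurable (ξ i)) (hindep : iIndepFun ξ μ)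
    (hid : ∀ i, IdentDistrib (ξ i) ξ₀ μ μ) (hint4 : Integrable (fun ω => ξ₀ ω ^ 4) μ)
    {σ a K : ℝ} (hσpos : 0 < σ) (hσ : σ ^ 2 = ∫ ω, ξ₀ ω ^ 2 ∂μ)
    (hkurt : (∫ ω, ξ₀ ω ^ 4 ∂μ) / σ ^ 4 ≤ K) (ha : 1 ≤ a) :
    μ.real {ω | (∑ i, ξ i ω ^ 2) / Fintype.card ι ≤ σ ^ 2 / a}
      ≤ Real.exp (-(Fintype.card ι * (1 - 1 / a) ^ 2) / (2 * K)) := by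
  have hn : 0 < (Fintype.card ι : ℝ) := Nat.cast_pos.2 Fintype.card_pos
  have hmoments (i : ι) : Integrable (fun ω => (ξ i ω ^ 2) ^ 2) μ ∧ μ[fun ω => ξ i ω ^ 2] = σ ^ 2
      ∧ μ[fun ω => (ξ i ω ^ 2) ^ 2] ≤ K * σ ^ 4 := by
    have h4 := (hid i).comp (measurable_id.pow_const 4)
    simp only [← pow_mul]
    refine ⟨h4.integrable_iff.2 hint4, ?_, ?_⟩
    · exact hσ ▸ ((hid i).comp (measurable_id.pow_const 2)).integral_eq
    · rw [← div_le_iff₀ (by positivity)]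
      exact h4.integral_eq ▸ hkurt
  have h1a : 0 ≤ 1 - 1 / a := sub_nonneg.2 ((div_le_one (by linarith)).2 ha)
  have hlow := measureReal_sum_le_sub_le_exp (μ := μ) (Y := fun i ω => ξ i ω ^ 2)
    (fun i => (hmeas i).pow_const 2) (hindep.comp _ fun _ => measurable_id.pow_const 2)
    (fun i ω => sq_nonneg _) (fun i => (hmoments i).1) (fun i => (hmoments i).2.1)
    (fun i => (hmoments i).2.2) (mul_nonneg (mul_nonneg hn.le (sq_nonneg σ)) h1a)
  set n : ℝ := (Fintype.card ι : ℝ)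
  have hthreshold : n * σ ^ 2 - n * σ ^ 2 * (1 - 1 / a) = σ ^ 2 / a * n := by ring
  have hexponent : -(n * σ ^ 2 * (1 - 1 / a)) ^ 2 / (2 * (n * (K * σ ^ 4)))
      = -(n * (1 - 1 / a) ^ 2) / (2 * K) := by
    rcases eq_or_ne K 0 with rfl | hK
    · simp
    · field_simp
  simpa only [hthreshold, hexponent, div_le_iff₀ hn] using hlow

lemma abs_measureReal_le_sub_Phi_le_one (S : Ω → ℝ) (z : ℝ) :
    |μ.real {ω | S ω ≤ z} - Phi z| ≤ 1 :=
  abs_sub_le_of_nonneg_of_le measureReal_nonneg measureReal_le_one (Phi_nonneg z) (Phi_le_one z)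

/-- The correction `c` cancels, so it can be the (even) Edgeworth term or `0`. -/
lemma measureReal_lt_abs_le {S : Ω → ℝ} (hS : Measurable S) {y c Δ : ℝ}
    (hy : |μ.real {ω | S ω ≤ y} - Phi y - c| ≤ Δ)
    (hny : |μ.real {ω | S ω ≤ -y} - Phi (-y) - c| ≤ Δ) :
    μ.real {ω | y < |S ω|} ≤ 2 * (Phi (-y) + Δ) := by
  have hsub : {ω | y < |S ω|} ⊆ {ω | S ω ≤ y}ᶜ ∪ {ω | S ω ≤ -y} := fun ω (hω : y < |S ω|) => by
    rcases lt_abs.1 hω with h | h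
    · exact Or.inl (not_le.2 h)
    · exact Or.inr (show S ω ≤ -y by linarith)
  rw [abs_le] at hy hny
  calc μ.real {ω | y < |S ω|} ≤ μ.real ({ω | S ω ≤ y}ᶜ ∪ {ω | S ω ≤ -y}) := measureReal_mono hsub
    _ ≤ μ.real {ω | S ω ≤ y}ᶜ + μ.real {ω | S ω ≤ -y} := measureReal_union_le _ _
    _ ≤ 2 * (Phi (-y) + Δ) := by
        rw [probReal_compl_eq_one_sub (s := {ω | S ω ≤ y}) (hS measurableSet_Iic)]
        linarith [Phi_neg y]

lemma measureReal_lt_abs_le_two_mul_Phi_add_min {S : Ω → ℝ} (hS : Measurable S) (c y : ℝ) :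
    μ.real {ω | y < |S ω|} ≤ 2 * (Phi (-y)
      + min (⨆ x : ℝ, |μ.real {ω | S ω ≤ x} - Phi x - c * (1 - x ^ 2) * gpdf x|)
        (⨆ x : ℝ, |μ.real {ω | S ω ≤ x} - Phi x|)) := by
  have hEbdd (x : ℝ) : |μ.real {ω | S ω ≤ x} - Phi x - c * (1 - x ^ 2) * gpdf x| ≤ 1 + |c| * 2 := by
    refine (abs_sub _ _).trans (add_le_add (abs_measureReal_le_sub_Phi_le_one S x) ?_)
    rw [mul_assoc, abs_mul]
    exact mul_le_mul_of_nonneg_left (abs_one_sub_sq_mul_gpdf_le x) (abs_nonneg c)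
  set ΔE := ⨆ x : ℝ, |μ.real {ω | S ω ≤ x} - Phi x - c * (1 - x ^ 2) * gpdf x|
  set ΔB := ⨆ x : ℝ, |μ.real {ω | S ω ≤ x} - Phi x|
  have hE (z : ℝ) : |μ.real {ω | S ω ≤ z} - Phi z - c * (1 - z ^ 2) * gpdf z| ≤ ΔE :=
    le_ciSup ⟨_, Set.forall_mem_range.2 hEbdd⟩ z
  have hB (z : ℝ) : |μ.real {ω | S ω ≤ z} - Phi z| ≤ ΔB :=
    le_ciSup ⟨1, Set.forall_mem_range.2 (abs_measureReal_le_sub_Phi_le_one S)⟩ z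
  rcases min_choice ΔE ΔB with h | h <;> rw [h]
  · exact measureReal_lt_abs_le hS (hE y) (by simpa only [neg_sq, gpdf_neg] using hE (-y))
  · exact measureReal_lt_abs_le hS (c := 0) (by simpa using hB y) (by simpa using hB (-y))

end SelfNormalized

lemma div_sqrt_lt_div_of_sqrt_mul_lt {q σ a x r : ℝ} (hσ : 0 < σ) (hx : 0 ≤ x)
    (hq : σ ^ 2 / a ≤ q) (h : Real.sqrt q * x < r) : x / Real.sqrt a < r / σ := by
  rw [lt_div_iff₀ hσ]
  calc x / Real.sqrt a * σ = Real.sqrt (σ ^ 2 / a) * x := by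
        rw [Real.sqrt_div (sq_nonneg σ), Real.sqrt_sq hσ.le]
        ring
    _ ≤ Real.sqrt q * x := by gcongr
    _ < r := h

theorem stmt_13_general {Ω : Type*} [MeasurableSpace Ω] (μ : Measure Ω) [IsProbabilityMeasure μ]
    (n : ℕ) (hn : 1 ≤ n) (a K : ℝ) (ha : 1 < a)
    (ξ : Fin n → Ω → ℝ) (ξ₀ : Ω → ℝ)
    (hmeas : ∀ i, Measurable (ξ i))
    (hindep : iIndepFun ξ μ)
    (hid : ∀ i, IdentDistrib (ξ i) ξ₀ μ μ)
    (hint4 : Integrable (fun ω => ξ₀ ω ^ 4) μ)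
    (σ : ℝ) (hσpos : 0 < σ) (hσ : σ ^ 2 = ∫ ω, ξ₀ ω ^ 2 ∂μ)
    (hkurt : (∫ ω, ξ₀ ω ^ 4 ∂μ) / σ ^ 4 ≤ K)
    (S : Ω → ℝ) (hS : S = fun ω => Real.sqrt n * ((∑ i, ξ i ω) / n) / σ)
    (lam3 ΔB ΔE : ℝ)
    (hΔB : ΔB = ⨆ x : ℝ, |(μ {ω | S ω ≤ x}).toReal - Phi x|)
    (hΔE : ΔE = ⨆ x : ℝ,
      |(μ {ω | S ω ≤ x}).toReal - Phi x - lam3 / (6 * Real.sqrt n) * (1 - x ^ 2) * gpdf x|) :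
    ∀ x : ℝ, 0 < x →
      (μ {ω | Real.sqrt ((∑ i, ξ i ω ^ 2) / n) * x < Real.sqrt n * |(∑ i, ξ i ω) / n|}).toReal
        ≤ 2 * (Phi (-(x / Real.sqrt a)) + min ΔE ΔB)
          + Real.exp (-(n * (1 - 1 / a) ^ 2) / (2 * K)) := by
  subst hΔB hΔE
  intro x hx
  have : Nonempty (Fin n) := ⟨⟨0, hn⟩⟩
  have hSmeas : Measurable S := hS ▸ by fun_prop
  set y := x / Real.sqrt a
  have htail :=
    measureReal_lt_abs_le_two_mul_Phi_add_min (μ := μ) hSmeas (lam3 / (6 * Real.sqrt n)) y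
  have hlow := measureReal_mean_sq_le_le_exp hmeas hindep hid hint4 hσpos hσ hkurt ha.le
  rw [Fintype.card_fin] at hlow
  have hsub : {ω | Real.sqrt ((∑ i, ξ i ω ^ 2) / n) * x < Real.sqrt n * |(∑ i, ξ i ω) / n|}
      ⊆ {ω | y < |S ω|} ∪ {ω | (∑ i, ξ i ω ^ 2) / n ≤ σ ^ 2 / a} := fun ω hω => by
    refine or_iff_not_imp_right.2 fun hq => ?_
    have := div_sqrt_lt_div_of_sqrt_mul_lt hσpos hx.le (le_of_lt (not_le.1 hq)) hω
    simpa [y, hS, abs_div, abs_mul, abs_of_pos hσpos, abs_of_nonneg (Real.sqrt_nonneg _)] using this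
  calc _ ≤ μ.real ({ω | y < |S ω|} ∪ {ω | (∑ i, ξ i ω ^ 2) / n ≤ σ ^ 2 / a}) :=
        measureReal_mono hsub
    _ ≤ μ.real {ω | y < |S ω|} + μ.real {ω | (∑ i, ξ i ω ^ 2) / n ≤ σ ^ 2 / a} :=
        measureReal_union_le _ _
    _ ≤ _ := add_le_add htail hlow

/-- Self-normalized tail bound (oracle variance estimator `σ̂₀`): for i.i.d. centered
`ξᵢ` with kurtosis bounded by `K`, for every `x > 0` and `a > 1`,
`P(√n |ξ̄_n| > σ̂₀ x) ≤ 2(Φ(-x/√a) + min(Δ_E, Δ_B)) + exp(-n(1-1/a)²/(2K))`. -/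
theorem stmt_13 {Ω : Type*} [MeasurableSpace Ω] (μ : Measure Ω) [IsProbabilityMeasure μ]
    (n : ℕ) (hn : 1 ≤ n) (a K : ℝ) (ha : 1 < a)
    (ξ : Fin n → Ω → ℝ) (ξ₀ : Ω → ℝ)
    (hmeas : ∀ i, Measurable (ξ i)) (hmeas₀ : Measurable ξ₀)
    (hindep : iIndepFun ξ μ)
    (hid : ∀ i, IdentDistrib (ξ i) ξ₀ μ μ)
    (hint4 : Integrable (fun ω => ξ₀ ω ^ 4) μ)
    (hmean : ∫ ω, ξ₀ ω ∂μ = 0)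
    (σ : ℝ) (hσpos : 0 < σ) (hσ : σ ^ 2 = ∫ ω, ξ₀ ω ^ 2 ∂μ)
    (hkurt : (∫ ω, ξ₀ ω ^ 4 ∂μ) / σ ^ 4 ≤ K)
    (S : Ω → ℝ) (hS : S = fun ω => Real.sqrt n * ((∑ i, ξ i ω) / n) / σ)
    (lam3 ΔB ΔE : ℝ)
    (hlam3 : lam3 = (∫ ω, ξ₀ ω ^ 3 ∂μ) / σ ^ 3)
    (hΔB : ΔB = ⨆ x : ℝ, |(μ {ω | S ω ≤ x}).toReal - Phi x|)
    (hΔE : ΔE = ⨆ x : ℝ,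
      |(μ {ω | S ω ≤ x}).toReal - Phi x - lam3 / (6 * Real.sqrt n) * (1 - x ^ 2) * gpdf x|) :
    ∀ x : ℝ, 0 < x →
      (μ {ω | Real.sqrt ((∑ i, ξ i ω ^ 2) / n) * x < Real.sqrt n * |(∑ i, ξ i ω) / n|}).toReal
        ≤ 2 * (Phi (-(x / Real.sqrt a)) + min ΔE ΔB)
          + Real.exp (-(n * (1 - 1 / a) ^ 2) / (2 * K)) :=
  stmt_13_general μ n hn a K ha ξ ξ₀ hmeas hindep hid hint4 σ hσpos hσ hkurt S hS lam3 ΔB ΔE hΔB hΔE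
end
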